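/- Let 𝒢 be a temporal graph with lifetime Λ whose underlying graph G is connected. Let H be the graph whose vertices are the pairs (C, t), where t ∈ {1, …, Λ} and C is a connected component of the snapshot G_t, and in which (C, t) is adjacent to (C', t+1) whenever V(C) ∩ V(C') ≠ ∅. Then H is connected. -/

import Mathlib

variable {V : Type} [Fintype V] [DecidableEq V]

/-- The snapshot of a temporal graph `(G, lam)` at time `t`: the static graph on `V`
whose edges are the edges of `G` active at time `t`. -/
def snapshot (G : SimpleGraph V) (lam : Sym2 V → Finset ℕ) (t : ℕ) : SimpleGraph V where
  Adj u v := G.Adj u v ∧ t ∈ lam s(u, v)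
  symm := by
    constructor
    rintro u v ⟨h1, h2⟩
    exact ⟨h1.symm, by rwa [Sym2.eq_swap]⟩
  loopless := by
    constructor
    exact fun v h => G.irrefl h.1

/-- The graph `H` whose vertices are pairs `(t, C)` with `t ∈ {1, …, Λ}` and `C` a
connected component of the snapshot `G_t`, where `(t, C)` and `(t', C')` are adjacent iff
`t' = t + 1` (or `t = t' + 1`) and the components share a vertex. -/
def compGraph (G : SimpleGraph V) (lam : Sym2 V → Finset ℕ) (Λ : ℕ) :
    SimpleGraph
      (Σ t : {t : ℕ // t ∈ Finset.Icc 1 Λ}, (snapshot G lam t.val).ConnectedComponent) where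
  Adj p q :=
    ((q.1 : ℕ) = (p.1 : ℕ) + 1 ∨ (p.1 : ℕ) = (q.1 : ℕ) + 1) ∧
      (p.2.supp ∩ q.2.supp).Nonempty
  symm := by
    constructor
    rintro p q ⟨h1, h2⟩
    exact ⟨h1.symm, by rwa [Set.inter_comm]⟩
  loopless := by
    constructor
    rintro p ⟨h1, -⟩
    rcases h1 with h | h <;> omega

/-- If the underlying graph of a temporal graph is connected, then the
graph whose vertices are the pairs (connected component of a snapshot, time), with
components at consecutive times adjacent when they share a vertex, is connected. -/
theorem stmt_6 (G : SimpleGraph V) (lam : Sym2 V → Finset ℕ) (Λ : ℕ)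
    (hconn : G.Connected) (hΛ : 1 ≤ Λ)
    (hne : ∀ e ∈ G.edgeSet, (lam e).Nonempty)
    (hempty : ∀ e, e ∉ G.edgeSet → lam e = ∅)
    (hbdd : ∀ e, ∀ t ∈ lam e, 1 ≤ t ∧ t ≤ Λ)
    (hlife : ∃ e ∈ G.edgeSet, Λ ∈ lam e) :
    (compGraph G lam Λ).Connected := by
    classical
  have hV : Nonempty V := hconn.nonempty
  let node : V → (t : ℕ) → 1 ≤ t → t ≤ Λ →
      (Σ t : {t : ℕ // t ∈ Finset.Icc 1 Λ}, (snapshot G lam t.val).ConnectedComponent) :=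
    fun v t h1 h2 =>
      ⟨⟨t, Finset.mem_Icc.mpr ⟨h1, h2⟩⟩, (snapshot G lam t).connectedComponentMk v⟩
  have hadj : ∀ v t (h1 : 1 ≤ t) (h2 : t + 1 ≤ Λ),
      (compGraph G lam Λ).Adj (node v t h1 (by omega)) (node v (t+1) (by omega) h2) := by
    intro v t h1 h2
    refine ⟨Or.inl rfl, ⟨v, ?_, ?_⟩⟩ <;>
      simp [node, SimpleGraph.ConnectedComponent.mem_supp_iff]
  have hto1 : ∀ v t (h1 : 1 ≤ t) (h2 : t ≤ Λ),
      (compGraph G lam Λ).Reachable (node v t h1 h2) (node v 1 le_rfl hΛ) := by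
    intro v t
    induction t with
    | zero => intro h1 _; omega
    | succ n ih =>
      intro h1 h2
      by_cases hn : n = 0
      · subst hn; exact SimpleGraph.Reachable.refl _
      · have hn1 : 1 ≤ n := Nat.one_le_iff_ne_zero.mpr hn
        exact ((hadj v n hn1 h2).symm.reachable).trans (ih hn1 (by omega))
  have hadjG : ∀ u v, G.Adj u v →
      (compGraph G lam Λ).Reachable (node u 1 le_rfl hΛ) (node v 1 le_rfl hΛ) := by
    intro u v huv
    obtain ⟨s, hs⟩ := hne s(u, v) (G.mem_edgeSet.mpr huv)
    obtain ⟨hs1, hs2⟩ := hbdd _ s hs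
    have hC : (snapshot G lam s).connectedComponentMk u
        = (snapshot G lam s).connectedComponentMk v :=
      (SimpleGraph.ConnectedComponent.eq).mpr (SimpleGraph.Adj.reachable (show G.Adj u v ∧ s ∈ lam s(u, v) from ⟨huv, hs⟩))
    have hnode : node u s hs1 hs2 = node v s hs1 hs2 := by
      simp only [node]
      exact congrArg _ hC
    exact ((hto1 u s hs1 hs2).symm.trans (hnode ▸ hto1 v s hs1 hs2))
  have hall : ∀ u v,
      (compGraph G lam Λ).Reachable (node u 1 le_rfl hΛ) (node v 1 le_rfl hΛ) := by
    intro u v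
    obtain ⟨w⟩ := hconn.preconnected u v
    induction w with
    | nil => exact SimpleGraph.Reachable.refl _
    | cons h p ih => exact (hadjG _ _ h).trans ih
  obtain ⟨v0⟩ := hV
  haveI : Nonempty
      (Σ t : {t : ℕ // t ∈ Finset.Icc 1 Λ}, (snapshot G lam t.val).ConnectedComponent) :=
    ⟨node v0 1 le_rfl hΛ⟩
  refine ⟨?_⟩
  rintro ⟨⟨t, ht⟩, C⟩ ⟨⟨t', ht'⟩, C'⟩
  obtain ⟨ht1, ht2⟩ := Finset.mem_Icc.mp ht
  obtain ⟨ht1', ht2'⟩ := Finset.mem_Icc.mp ht'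
  obtain ⟨v, rfl⟩ := C.exists_rep
  obtain ⟨v', rfl⟩ := C'.exists_rep
  exact ((hto1 v t ht1 ht2).trans (hall v v')).trans (hto1 v' t' ht1' ht2').symm
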